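/- (Level bound / property (4) of perfectness) For any A ∈ B^{i,ℓ} of type A_n^{(1)}, Σ_{j=0}^{n} ε_j(A) ≥ ℓ, where ε₀(A) = ℓ - Σ_{j=i}^{n} a_{1,j} - Σ_{j=2}^{n} a_{j,n} and ε_l for l = 1,…,n are the classical statistics of the polytope model. -/

import Mathlib

open Finset

/-- Matrices of the polytope model: entry `a p q` for row `p`, column `q`. -/
abbrev Mat := ℕ → ℕ → ℕ

/-- A monotone lattice path `β(1) = (1,i), …, β(n) = (i,n)`: each step increases
the row or the column index by 1. -/
def IsPath (n i : ℕ) (β : ℕ → ℕ × ℕ) : Prop :=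
  β 1 = (1, i) ∧ β n = (i, n) ∧
    ∀ s, 1 ≤ s → s < n →
      β (s + 1) = ((β s).1 + 1, (β s).2) ∨ β (s + 1) = ((β s).1, (β s).2 + 1)

/-- Membership in the Kirillov–Reshetikhin polytope `B^{i,m}` of type `A_n^{(1)}`:
non-negative integer matrices indexed by `1 ≤ p ≤ i`, `i ≤ q ≤ n` (zero outside),
all of whose monotone lattice-path sums are at most `m`. -/
def MemKR (n i m : ℕ) (a : Mat) : Prop :=
  (∀ p q, ¬(1 ≤ p ∧ p ≤ i ∧ i ≤ q ∧ q ≤ n) → a p q = 0) ∧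
  ∀ β : ℕ → ℕ × ℕ, IsPath n i β → ∑ s ∈ Icc 1 n, a (β s).1 (β s).2 ≤ m

/-- The set of maximizers of `F` on `S`. -/
def maximizers (S : Finset ℕ) (F : ℕ → ℕ) : Finset ℕ :=
  S.filter fun q => ∀ q' ∈ S, F q' ≤ F q

/-- Smallest maximizer. -/
def argmaxLow (S : Finset ℕ) (F : ℕ → ℕ) : ℕ := WithTop.untopD 0 (maximizers S F).min

/-- Largest maximizer. -/
def argmaxHigh (S : Finset ℕ) (F : ℕ → ℕ) : ℕ := WithBot.unbotD 0 (maximizers S F).max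

/-- For `l > i`: `G(q) = Σ_{j=1}^q a_{j,l-1} + Σ_{j=q}^i a_{j,l}`. -/
def Gplus (i : ℕ) (a : Mat) (l q : ℕ) : ℕ :=
  ∑ j ∈ Icc 1 q, a j (l - 1) + ∑ j ∈ Icc q i, a j l

/-- For `l < i`: `F(q) = Σ_{j=i}^q a_{l,j} + Σ_{j=q}^n a_{l+1,j}`. -/
def Fminus (n i : ℕ) (a : Mat) (l q : ℕ) : ℕ :=
  ∑ j ∈ Icc i q, a l j + ∑ j ∈ Icc q n, a (l + 1) j

def pPlus (i : ℕ) (a : Mat) (l : ℕ) : ℕ := argmaxLow (Icc 1 i) (Gplus i a l)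
def qPlus (i : ℕ) (a : Mat) (l : ℕ) : ℕ := argmaxHigh (Icc 1 i) (Gplus i a l)
def pMinus (n i : ℕ) (a : Mat) (l : ℕ) : ℕ := argmaxHigh (Icc i n) (Fminus n i a l)
def qMinus (n i : ℕ) (a : Mat) (l : ℕ) : ℕ := argmaxLow (Icc i n) (Fminus n i a l)

/-- The statistic `φ_l` of the polytope model (`l = 0` is the affine one). -/
def phi (n i m : ℕ) (a : Mat) (l : ℕ) : ℤ :=
  if l = 0 then (a 1 n : ℤ)
  else if l = i then
    (m : ℤ) - ∑ j ∈ Icc 1 (i - 1), (a j i : ℤ) - ∑ j ∈ Icc i n, (a i j : ℤ)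
  else if i < l then
    ∑ j ∈ Icc 1 (pPlus i a l), (a j (l - 1) : ℤ)
      - ∑ j ∈ Icc 1 (pPlus i a l - 1), (a j l : ℤ)
  else
    ∑ j ∈ Icc (pMinus n i a l) n, (a (l + 1) j : ℤ)
      - ∑ j ∈ Icc (pMinus n i a l + 1) n, (a l j : ℤ)

/-- The statistic `ε_l` of the polytope model (`l = 0` is the affine one). -/
def eps (n i m : ℕ) (a : Mat) (l : ℕ) : ℤ :=
  if l = 0 then
    (m : ℤ) - ∑ j ∈ Icc i n, (a 1 j : ℤ) - ∑ j ∈ Icc 2 n, (a j n : ℤ)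
  else if l = i then (a i i : ℤ)
  else if i < l then
    ∑ j ∈ Icc (qPlus i a l) i, (a j l : ℤ)
      - ∑ j ∈ Icc (qPlus i a l + 1) i, (a j (l - 1) : ℤ)
  else
    ∑ j ∈ Icc i (qMinus n i a l), (a l j : ℤ)
      - ∑ j ∈ Icc i (qMinus n i a l - 1), (a (l + 1) j : ℤ)

/-- Update one entry of a matrix. -/
def upd (a : Mat) (p q v : ℕ) : Mat :=
  fun p' q' => if p' = p ∧ q' = q then v else a p' q'

/-- The Kashiwara raising operator `ẽ_l` on `B^{i,m}` (`l = 0` affine). -/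
def eOp (n i m : ℕ) (a : Mat) (l : ℕ) : Option Mat :=
  if eps n i m a l ≤ 0 then none
  else some (
    if l = 0 then upd a 1 n (a 1 n + 1)
    else if l = i then upd a i i (a i i - 1)
    else if i < l then
      upd (upd a (qPlus i a l) (l - 1) (a (qPlus i a l) (l - 1) + 1))
        (qPlus i a l) l (a (qPlus i a l) l - 1)
    else
      upd (upd a l (qMinus n i a l) (a l (qMinus n i a l) - 1))
        (l + 1) (qMinus n i a l) (a (l + 1) (qMinus n i a l) + 1))

/-- The Kashiwara lowering operator `f̃_l` on `B^{i,m}` (`l = 0` affine). -/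
def fOp (n i m : ℕ) (a : Mat) (l : ℕ) : Option Mat :=
  if phi n i m a l ≤ 0 then none
  else some (
    if l = 0 then upd a 1 n (a 1 n - 1)
    else if l = i then upd a i i (a i i + 1)
    else if i < l then
      upd (upd a (pPlus i a l) (l - 1) (a (pPlus i a l) (l - 1) - 1))
        (pPlus i a l) l (a (pPlus i a l) l + 1)
    else
      upd (upd a l (pMinus n i a l) (a l (pMinus n i a l) + 1))
        (l + 1) (pMinus n i a l) (a (l + 1) (pMinus n i a l) - 1))

/-- `ẽ_l` on the tensor product `B^{r₁,s₁} ⊗ B^{r₂,s₂}`. -/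
def eTen (n r₁ s₁ r₂ s₂ l : ℕ) (x : Mat × Mat) : Option (Mat × Mat) :=
  if phi n r₂ s₂ x.2 l < eps n r₁ s₁ x.1 l then
    (eOp n r₁ s₁ x.1 l).map fun a' => (a', x.2)
  else (eOp n r₂ s₂ x.2 l).map fun b' => (x.1, b')

/-- `f̃_l` on the tensor product `B^{r₁,s₁} ⊗ B^{r₂,s₂}`. -/
def fTen (n r₁ s₁ r₂ s₂ l : ℕ) (x : Mat × Mat) : Option (Mat × Mat) :=
  if phi n r₂ s₂ x.2 l ≤ eps n r₁ s₁ x.1 l then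
    (fOp n r₁ s₁ x.1 l).map fun a' => (a', x.2)
  else (fOp n r₂ s₂ x.2 l).map fun b' => (x.1, b')

/-- Classical highest weight element of the tensor product. -/
def IsHW (n r₁ s₁ r₂ s₂ : ℕ) (x : Mat × Mat) : Prop :=
  ∀ l, 1 ≤ l → l ≤ n → eTen n r₁ s₁ r₂ s₂ l x = none

/-- Cartan matrix of type `A_n`: `⟨α_r, α_j^∨⟩`. -/
def cartan (r j : ℕ) : ℤ :=
  if r = j then 2 else if r + 1 = j ∨ j + 1 = r then -1 else 0

/-- The pairing `⟨wt(A), α_j^∨⟩` where `wt(A) = m ω_i - Σ a_{p,q} α_{p,q}`,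
and `α_{p,q} = α_p + ⋯ + α_q`. -/
def wtCoord (n i m : ℕ) (a : Mat) (j : ℕ) : ℤ :=
  (if j = i then (m : ℤ) else 0)
    - ∑ p ∈ Icc 1 i, ∑ q ∈ Icc i n, (a p q : ℤ) * ∑ r ∈ Icc p q, cartan r j

/-- The matrix `b^Λ` with `(p,q)`-entry `c ((p+q) mod (n+1))` on the index range. -/
def bOf (n i : ℕ) (c : ℕ → ℕ) : Mat :=
  fun p q => if 1 ≤ p ∧ p ≤ i ∧ i ≤ q ∧ q ≤ n then c ((p + q) % (n + 1)) else 0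

/-!
The statistics `ε_l` with `l ≥ i` are each bounded below by an entry of row `i`, so together they
dominate the row sum `R_i = Σ_{j ≥ i} a_{i,j}`. For `l < i` the maximizer `q_-^l` bounds `ε_l` below
by `R_l - R_{l+1} + a_{l+1,n}`, and these bounds telescope to `R_1 - R_i + Σ_{p=2}^{i} a_{p,n}`.
Adding `ε_0 = ℓ - R_1 - Σ_{p=2}^{n} a_{p,n}` leaves `ℓ`, because column `n` vanishes below row `i`.
-/

namespace Finset

theorem sum_Icc_consecutive {M : Type*} [AddCommMonoid M] (f : ℕ → M) {m n k : ℕ}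
    (hmn : m ≤ n + 1) (hnk : n ≤ k) :
    ∑ j ∈ Icc m n, f j + ∑ j ∈ Icc (n + 1) k, f j = ∑ j ∈ Icc m k, f j := by
  simp only [← Ico_add_one_right_eq_Icc]
  exact sum_Ico_consecutive f hmn (by omega)

end Finset

section Maximizers

variable {S : Finset ℕ} {F : ℕ → ℕ}

theorem mem_maximizers {q : ℕ} : q ∈ maximizers S F ↔ q ∈ S ∧ ∀ q' ∈ S, F q' ≤ F q :=
  mem_filter

theorem maximizers_nonempty (hS : S.Nonempty) : (maximizers S F).Nonempty := by
  obtain ⟨q, hqS, hq⟩ := S.exists_max_image F hS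
  exact ⟨q, mem_maximizers.2 ⟨hqS, hq⟩⟩

theorem argmaxHigh_mem_maximizers (hS : S.Nonempty) : argmaxHigh S F ∈ maximizers S F := by
  obtain ⟨q, hq⟩ := max_of_nonempty (maximizers_nonempty (F := F) hS)
  rw [argmaxHigh, hq]
  exact mem_of_max hq

theorem argmaxLow_mem_maximizers (hS : S.Nonempty) : argmaxLow S F ∈ maximizers S F := by
  obtain ⟨q, hq⟩ := min_of_nonempty (maximizers_nonempty (F := F) hS)
  rw [argmaxLow, hq]
  exact mem_of_min hq

end Maximizers

section Eps

variable {n i ℓ : ℕ} {a : Mat} {l : ℕ}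

theorem qPlus_mem_maximizers (hi1 : 1 ≤ i) : qPlus i a l ∈ maximizers (Icc 1 i) (Gplus i a l) :=
  argmaxHigh_mem_maximizers (nonempty_Icc.2 hi1)

theorem qMinus_mem_maximizers (hin : i ≤ n) :
    qMinus n i a l ∈ maximizers (Icc i n) (Fminus n i a l) :=
  argmaxLow_mem_maximizers (nonempty_Icc.2 hin)

theorem eps_add_sum_eq_Gplus (hi1 : 1 ≤ i) (hl : i < l) :
    eps n i ℓ a l + ∑ j ∈ Icc 1 i, (a j (l - 1) : ℤ) = Gplus i a l (qPlus i a l) := by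
  have hq := (mem_maximizers.1 (qPlus_mem_maximizers (a := a) (l := l) hi1)).1
  rw [mem_Icc] at hq
  rw [eps, if_neg (by omega), if_neg (by omega), if_pos hl, Gplus,
    ← sum_Icc_consecutive (fun j ↦ (a j (l - 1) : ℤ)) (by omega : 1 ≤ qPlus i a l + 1) hq.2]
  push_cast
  ring

theorem apply_le_eps_of_lt (hi1 : 1 ≤ i) (hl : i < l) : (a i l : ℤ) ≤ eps n i ℓ a l := by
  have hmax := (mem_maximizers.1 (qPlus_mem_maximizers (a := a) (l := l) hi1)).2 i (by simp [hi1])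
  have hGi : (Gplus i a l i : ℤ) = ∑ j ∈ Icc 1 i, (a j (l - 1) : ℤ) + a i l := by
    simp [Gplus]
  have := eps_add_sum_eq_Gplus (n := n) (ℓ := ℓ) (a := a) hi1 hl
  zify at hmax
  linarith

theorem eps_add_sum_eq_Fminus (hin : i ≤ n) (hl1 : 1 ≤ l) (hl : l < i) :
    eps n i ℓ a l + ∑ j ∈ Icc i n, (a (l + 1) j : ℤ) = Fminus n i a l (qMinus n i a l) := by
  have hq := (mem_maximizers.1 (qMinus_mem_maximizers (a := a) (l := l) hin)).1
  rw [mem_Icc] at hq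
  have hq1 : qMinus n i a l - 1 + 1 = qMinus n i a l := by omega
  rw [eps, if_neg (by omega), if_neg (by omega), if_neg (by omega), Fminus,
    ← sum_Icc_consecutive (fun j ↦ (a (l + 1) j : ℤ)) (by omega : i ≤ qMinus n i a l - 1 + 1)
      (by omega : qMinus n i a l - 1 ≤ n), hq1]
  push_cast
  ring

theorem rowSum_sub_rowSum_le_eps (hin : i ≤ n) (hl1 : 1 ≤ l) (hl : l < i) :
    ∑ j ∈ Icc i n, (a l j : ℤ) - ∑ j ∈ Icc i n, (a (l + 1) j : ℤ) + a (l + 1) n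
      ≤ eps n i ℓ a l := by
  have hmax :=
    (mem_maximizers.1 (qMinus_mem_maximizers (a := a) (l := l) hin)).2 n (by simp [hin])
  have hFn : (Fminus n i a l n : ℤ) = ∑ j ∈ Icc i n, (a l j : ℤ) + a (l + 1) n := by
    simp [Fminus]
  have := eps_add_sum_eq_Fminus (ℓ := ℓ) (a := a) hin hl1 hl
  zify at hmax
  linarith

theorem rowSum_le_sum_eps (hi1 : 1 ≤ i) :
    ∑ l ∈ Icc i n, (a i l : ℤ) ≤ ∑ l ∈ Icc i n, eps n i ℓ a l := by
  refine sum_le_sum fun l hl ↦ ?_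
  rcases (mem_Icc.1 hl).1.eq_or_lt with rfl | hil
  · rw [eps, if_neg (by omega), if_pos rfl]
  · exact apply_le_eps_of_lt hi1 hil

theorem telescoped_le_sum_eps (hin : i ≤ n) (hi1 : 1 ≤ i) :
    ∑ j ∈ Icc i n, (a 1 j : ℤ) - ∑ j ∈ Icc i n, (a i j : ℤ) + ∑ l ∈ Ico 1 i, (a (l + 1) n : ℤ)
      ≤ ∑ l ∈ Ico 1 i, eps n i ℓ a l := by
  have htel := sum_Ico_sub (fun l ↦ ∑ j ∈ Icc i n, (a l j : ℤ)) hi1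
  have hle := sum_le_sum fun l (hl : l ∈ Ico 1 i) ↦
    rowSum_sub_rowSum_le_eps (a := a) (ℓ := ℓ) hin (mem_Ico.1 hl).1 (mem_Ico.1 hl).2
  simp only [sum_add_distrib, sum_sub_distrib] at hle htel
  linarith

theorem sum_column_eq_of_memKR {m : ℕ} (ha : MemKR n i m a) (hin : i ≤ n) :
    ∑ p ∈ Icc 2 n, (a p n : ℤ) = ∑ l ∈ Ico 1 i, (a (l + 1) n : ℤ) := by
  rw [sum_Ico_add' (fun p ↦ (a p n : ℤ)), ← Ico_add_one_right_eq_Icc]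
  refine (sum_subset (Ico_subset_Ico_right (by omega)) fun p hp hpi ↦ ?_).symm
  simp only [mem_Ico, not_and, not_lt] at hp hpi
  simp [ha.1 p n (by omega)]

end Eps

/-- level bound, property (4) of perfectness:
`Σ_{j=0}^n ε_j(A) ≥ ℓ` for any `A ∈ B^{i,ℓ}`. -/
theorem stmt15 (n i ℓ : ℕ) (hi1 : 1 ≤ i) (hin : i ≤ n) (a : Mat)
    (ha : MemKR n i ℓ a) :
    (ℓ : ℤ) ≤ ∑ j ∈ range (n + 1), eps n i ℓ a j := by
  have hsplit : ∑ j ∈ range (n + 1), eps n i ℓ a j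
      = eps n i ℓ a 0 + ∑ l ∈ Ico 1 i, eps n i ℓ a l + ∑ l ∈ Icc i n, eps n i ℓ a l := by
    rw [range_eq_Ico, sum_eq_sum_Ico_succ_bot (by omega), ← Ico_add_one_right_eq_Icc,
      add_assoc, sum_Ico_consecutive _ hi1 (by omega)]
  have heps0 : eps n i ℓ a 0
      = ℓ - ∑ j ∈ Icc i n, (a 1 j : ℤ) - ∑ p ∈ Icc 2 n, (a p n : ℤ) := if_pos rfl
  have hlow := telescoped_le_sum_eps (a := a) (ℓ := ℓ) hin hi1
  have hhigh := rowSum_le_sum_eps (n := n) (a := a) (ℓ := ℓ) hi1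
  rw [hsplit, heps0, sum_column_eq_of_memKR ha hin]
  linarith
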